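/- Let (G, P, θ) be an algebraic dynamical system such that every foundation set for P contained in P^(fin) admits an accurate refinement contained in P^(fin). Then every foundation set for S = G ⋊_θ P can be refined by an elementary foundation set; in particular S has property (AR). -/
import Mathlib


variable {G : Type*} [Group G] {P : Type*} [Monoid P]

/-- The principal right ideal `pP` in the monoid `P`. -/
def idealP (p : P) : Set P := {x | ∃ t, x = p * t}

/-- Multiplication in the semidirect product `S = G ⋊_θ P`:
`(g,p)(h,q) = (g·θ_p(h), pq)`. -/
def smulS (θ : P → G →* G) (s t : G × P) : G × P := (s.1 * θ s.2 t.1, s.2 * t.2)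

/-- The principal right ideal `sS` in `S = G ⋊_θ P`. -/
def idealS (θ : P → G →* G) (s : G × P) : Set (G × P) := {x | ∃ t, x = smulS θ s t}

/-- Foundation set for `P`. -/
def FoundP (F : Set P) : Prop :=
  F.Finite ∧ ∀ p : P, ∃ q ∈ F, (idealP p ∩ idealP q).Nonempty

/-- Accurate set in `P`: distinct elements have disjoint principal right ideals. -/
def AccP (F : Set P) : Prop :=
  ∀ p ∈ F, ∀ q ∈ F, p ≠ q → idealP p ∩ idealP q = ∅

/-- Foundation set for `S = G ⋊_θ P`. -/
def FoundS (θ : P → G →* G) (F : Set (G × P)) : Prop :=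
  F.Finite ∧ ∀ s : G × P, ∃ t ∈ F, (idealS θ s ∩ idealS θ t).Nonempty

/-- Accurate set in `S = G ⋊_θ P`. -/
def AccS (θ : P → G →* G) (F : Set (G × P)) : Prop :=
  ∀ s ∈ F, ∀ t ∈ F, s ≠ t → idealS θ s ∩ idealS θ t = ∅

/-- An elementary foundation set for `G ⋊_θ P`: the set of second components is an
accurate foundation set for `P` consisting of finite-index elements, and for each
such `p` the first components form a transversal for `G/θ_p(G)`. -/
def IsElementary (θ : P → G →* G) (F : Set (G × P)) : Prop :=
  FoundP {p : P | ∃ g : G, (g, p) ∈ F} ∧ AccP {p : P | ∃ g : G, (g, p) ∈ F} ∧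
  (∀ p : P, (∃ g : G, (g, p) ∈ F) → ((θ p).range).FiniteIndex) ∧
  (∀ p : P, (∃ g : G, (g, p) ∈ F) →
    ∀ x : G, ∃! g : G, (g, p) ∈ F ∧ g⁻¹ * x ∈ (θ p).range)


lemma idealP_self (p : P) : p ∈ idealP p := ⟨1, (mul_one p).symm⟩

lemma idealP_mono {p q : P} (h : q ∈ idealP p) : idealP q ⊆ idealP p := by
  obtain ⟨t, rfl⟩ := h
  rintro x ⟨s, rfl⟩
  exact ⟨t * s, mul_assoc _ _ _⟩

lemma mem_idealS_iff (θ : P → G →* G) {g h : G} {p q : P} :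
    (h, q) ∈ idealS θ (g, p) ↔ g⁻¹ * h ∈ (θ p).range ∧ q ∈ idealP p := by
  constructor
  · rintro ⟨t, ht⟩
    have h1 : h = g * θ p t.1 := congrArg Prod.fst ht
    have h2 : q = p * t.2 := congrArg Prod.snd ht
    refine ⟨⟨t.1, ?_⟩, ⟨t.2, h2⟩⟩
    rw [h1]; group
  · rintro ⟨⟨a, ha⟩, ⟨b, hb⟩⟩
    refine ⟨(a, b), ?_⟩
    simp only [smulS, Prod.mk.injEq]
    exact ⟨by rw [ha]; group, hb⟩

lemma deepen_lemma
    (hLCM : ∀ p q : P, idealP p ∩ idealP q = ∅ ∨ ∃ r : P, idealP p ∩ idealP q = idealP r)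
    (C : Finset P) (q : P) :
    ∃ u ∈ idealP q, ∀ p ∈ C, idealP p ∩ idealP u = ∅ ∨ u ∈ idealP p := by
  classical
  induction C using Finset.induction_on with
  | empty => exact ⟨q, idealP_self q, by simp⟩
  | @insert a s ha ih =>
    obtain ⟨u, huq, hu⟩ := ih
    rcases hLCM a u with hemp | ⟨r, hr⟩
    · refine ⟨u, huq, ?_⟩
      intro p hp
      rcases Finset.mem_insert.mp hp with rfl | hp
      · exact Or.inl hemp
      · exact hu p hp
    · have hrmem : r ∈ idealP a ∩ idealP u := hr ▸ idealP_self r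
      refine ⟨r, idealP_mono huq hrmem.2, ?_⟩
      intro p hp
      rcases Finset.mem_insert.mp hp with rfl | hp
      · exact Or.inr hrmem.1
      · rcases hu p hp with hemp' | hok
        · exact Or.inl (Set.eq_empty_of_subset_empty
            (hemp' ▸ Set.inter_subset_inter_right _ (idealP_mono hrmem.2)))
        · exact Or.inr (idealP_mono hok hrmem.2)

lemma lcm_lemma (θ : P → G →* G)
    (hone : θ 1 = MonoidHom.id G)
    (hLCM : ∀ p q : P, idealP p ∩ idealP q = ∅ ∨ ∃ r : P, idealP p ∩ idealP q = idealP r)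
    (hcompat : ∀ p q r : P, idealP p ∩ idealP q = idealP r →
      (θ p).range ⊓ (θ q).range = (θ r).range)
    {ι : Type*} (π : ι → P) (T : Finset ι) :
    ∃ r : P, ∀ u : P, (∀ i ∈ T, u ∈ idealP (π i)) →
      ((∀ i ∈ T, r ∈ idealP (π i)) ∧ u ∈ idealP r ∧
       ((∀ i ∈ T, ((θ (π i)).range).FiniteIndex) → ((θ r).range).FiniteIndex)) := by
  classical
  induction T using Finset.induction_on with
  | empty =>
    refine ⟨1, fun u _ => ⟨by simp, ⟨u, (one_mul u).symm⟩, fun _ => ?_⟩⟩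
    rw [hone]
    rw [MonoidHom.range_eq_top.mpr Function.surjective_id]
    infer_instance
  | @insert a s ha ih =>
    obtain ⟨r', hr'⟩ := ih
    rcases hLCM (π a) r' with hemp | ⟨r, hr⟩
    · refine ⟨r', fun u hu => absurd ?_ (Set.eq_empty_iff_forall_notMem.mp hemp u)⟩
      exact ⟨hu a (Finset.mem_insert_self a s),
        (hr' u (fun i hi => hu i (Finset.mem_insert_of_mem hi))).2.1⟩
    · refine ⟨r, fun u hu => ?_⟩
      have hus : ∀ i ∈ s, u ∈ idealP (π i) := fun i hi => hu i (Finset.mem_insert_of_mem hi)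
      obtain ⟨hr'mem, hur', hfin'⟩ := hr' u hus
      have hrmem : r ∈ idealP (π a) ∩ idealP r' := hr ▸ idealP_self r
      refine ⟨?_, ?_, ?_⟩
      · intro i hi
        rcases Finset.mem_insert.mp hi with rfl | hi
        · exact hrmem.1
        · exact idealP_mono (hr'mem i hi) hrmem.2
      · exact hr ▸ Set.mem_inter (hu a (Finset.mem_insert_self a s)) hur'
      · intro hfins
        have h1 : ((θ (π a)).range).FiniteIndex := hfins a (Finset.mem_insert_self a s)
        have h2 : ((θ r').range).FiniteIndex :=
          hfin' (fun i hi => hfins i (Finset.mem_insert_of_mem hi))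
        rw [← hcompat _ _ _ hr]
        infer_instance

open scoped Pointwise

/-- If every foundation set for `P` inside `P^(fin)` admits an accurate refinement
inside `P^(fin)`, then every foundation set for `S = G ⋊_θ P` can be refined by an
elementary foundation set; in particular `S` has property (AR). -/
theorem stmt11 (θ : P → G →* G)
    (hone : θ 1 = MonoidHom.id G)
    (hmul : ∀ p q : P, θ (p * q) = (θ p).comp (θ q))
    (hinj : ∀ p : P, Function.Injective (θ p))
    (hLCM : ∀ p q : P, idealP p ∩ idealP q = ∅ ∨ ∃ r : P, idealP p ∩ idealP q = idealP r)
    (hcompat : ∀ p q r : P, idealP p ∩ idealP q = idealP r →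
      (θ p).range ⊓ (θ q).range = (θ r).range)
    (hrefP : ∀ F : Set P, FoundP F → (∀ p ∈ F, ((θ p).range).FiniteIndex) →
      ∃ Fa : Set P, FoundP Fa ∧ AccP Fa ∧ (∀ p ∈ Fa, ((θ p).range).FiniteIndex) ∧
        ∀ a ∈ Fa, ∃ f ∈ F, a ∈ idealP f) :
    ∀ F : Set (G × P), FoundS θ F →
      ∃ Fe : Set (G × P), IsElementary θ Fe ∧ FoundS θ Fe ∧ AccS θ Fe ∧
        ∀ a ∈ Fe, ∃ f ∈ F, a ∈ idealS θ f := by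
  classical
  intro F hF
  obtain ⟨hFfin, hFcov⟩ := hF
  set Fs : Finset (G × P) := hFfin.toFinset with hFsdef
  have hFsmem : ∀ {f : G × P}, f ∈ Fs ↔ f ∈ F := fun {f} => hFfin.mem_toFinset
  -- the set of second components
  have hF2fin : (Prod.snd '' F).Finite := hFfin.image _
  set F2 : Finset P := hF2fin.toFinset with hF2def
  have hF2mem : ∀ {f : G × P}, f ∈ F → f.2 ∈ F2 := fun {f} hf =>
    hF2fin.mem_toFinset.mpr ⟨f, hf, rfl⟩
  -- the goodness predicate
  set Gd : P → Prop := fun t => ∀ x : G, ∃ f ∈ F, t ∈ idealP f.2 ∧ f.1⁻¹ * x ∈ (θ f.2).range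
    with hGddef
  have hGdup : ∀ {t t' : P}, Gd t → t' ∈ idealP t → Gd t' := by
    intro t t' h ht' x
    obtain ⟨f, hf, h1, h2⟩ := h x
    exact ⟨f, hf, idealP_mono h1 ht', h2⟩
  -- the chosen iterated lcm of (second components of) a finite set of pairs
  choose rfun hrfun using fun T : Finset (G × P) =>
    lcm_lemma θ hone hLCM hcompat (Prod.snd : G × P → P) T
  -- the candidate foundation set in P
  set F' : Set P :=
    {r | Gd r ∧ ((θ r).range).FiniteIndex ∧ ∃ T : Finset (G × P), T ⊆ Fs ∧ r = rfun T}
    with hF'def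
  have hF'fin : F'.Finite := by
    apply Set.Finite.subset (Fs.powerset.image rfun).finite_toSet
    rintro r ⟨-, -, T, hT, rfl⟩
    exact Finset.mem_coe.mpr (Finset.mem_image_of_mem _ (Finset.mem_powerset.mpr hT))
  -- key step: F' is a foundation set
  have hkey : ∀ q : P, ∃ r ∈ F', (idealP q ∩ idealP r).Nonempty := by
    intro q
    obtain ⟨u, huq, hu⟩ := deepen_lemma hLCM F2 q
    -- the coset cover coming from testing F against (x, u)
    have hcover : ⋃ f ∈ Fs.filter (fun f => u ∈ idealP f.2),
        f.1 • (((θ f.2).range : Subgroup G) : Set G) = Set.univ := by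
      rw [Set.eq_univ_iff_forall]
      intro x
      obtain ⟨f, hfF, z, hz1, hz2⟩ := hFcov (x, u)
      obtain ⟨t, rfl⟩ := hz1
      obtain ⟨t', ht'⟩ := hz2
      have h1 : x * θ u t.1 = f.1 * θ f.2 t'.1 := congrArg Prod.fst ht'
      have h2 : u * t.2 = f.2 * t'.2 := congrArg Prod.snd ht'
      have hmem : u ∈ idealP f.2 := by
        rcases hu f.2 (hF2mem hfF) with hemp | hok
        · have m1 : u * t.2 ∈ idealP f.2 := ⟨t'.2, h2⟩
          have m2 : u * t.2 ∈ idealP u := ⟨t.2, rfl⟩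
          exact absurd (Set.mem_inter m1 m2)
            (Set.eq_empty_iff_forall_notMem.mp hemp (u * t.2))
        · exact hok
      obtain ⟨v, hv⟩ := hmem
      have hθu : θ u t.1 ∈ (θ f.2).range := by
        rw [hv, hmul]
        exact ⟨θ v t.1, rfl⟩
      refine Set.mem_biUnion (Finset.mem_filter.mpr ⟨hFsmem.mpr hfF, ⟨v, hv⟩⟩) ?_
      rw [mem_leftCoset_iff]
      have : f.1⁻¹ * x = θ f.2 t'.1 * (θ u t.1)⁻¹ := by
        have : x = f.1 * θ f.2 t'.1 * (θ u t.1)⁻¹ := by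
          rw [← h1]; group
        rw [this]; group
      rw [this]
      exact mul_mem ⟨t'.1, rfl⟩ (inv_mem hθu)
    -- drop the infinite-index cosets
    have hcover2 := Subgroup.leftCoset_cover_filter_FiniteIndex
      (H := fun f : G × P => (θ f.2).range) (g := Prod.fst) hcover
    set T : Finset (G × P) := (Fs.filter (fun f => u ∈ idealP f.2)).filter
      (fun f => ((θ f.2).range).FiniteIndex) with hTdef
    have hTu : ∀ f ∈ T, u ∈ idealP f.2 := fun f hf =>
      (Finset.mem_filter.mp (Finset.mem_filter.mp hf).1).2
    have hTF : ∀ f ∈ T, f ∈ F := fun f hf =>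
      hFsmem.mp (Finset.mem_filter.mp (Finset.mem_filter.mp hf).1).1
    have hTfin : ∀ f ∈ T, ((θ f.2).range).FiniteIndex := fun f hf =>
      (Finset.mem_filter.mp hf).2
    obtain ⟨hrT1, hrT2, hrT3⟩ := hrfun T u hTu
    refine ⟨rfun T, ⟨?_, hrT3 hTfin, T,
      (Finset.filter_subset _ _).trans (Finset.filter_subset _ _), rfl⟩, u, huq, hrT2⟩
    -- goodness of rfun T
    intro x
    have hx : x ∈ ⋃ f ∈ T, f.1 • (((θ f.2).range : Subgroup G) : Set G) := by
      rw [hcover2]; trivial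
    obtain ⟨f, hfT, hxf⟩ := Set.mem_iUnion₂.mp hx
    exact ⟨f, hTF f hfT, hrT1 f hfT, (mem_leftCoset_iff _).mp hxf⟩
  have hF'found : FoundP F' := ⟨hF'fin, fun q => by
    obtain ⟨r, hr, hne⟩ := hkey q
    exact ⟨r, hr, hne⟩⟩
  obtain ⟨Fa, hFaFound, hFaAcc, hFafinidx, hFaref⟩ :=
    hrefP F' hF'found (fun r hr => hr.2.1)
  have hGdFa : ∀ a ∈ Fa, Gd a := by
    intro a ha
    obtain ⟨f, hf, haf⟩ := hFaref a ha
    exact hGdup hf.1 haf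
  -- coset representatives
  set rep : P → G → G := fun a x => (QuotientGroup.mk (s := (θ a).range) x).out with hrepdef
  have hrep_mk : ∀ (a : P) (x : G),
      (QuotientGroup.mk (s := (θ a).range) (rep a x)) = QuotientGroup.mk x :=
    fun a x => QuotientGroup.out_eq' _
  have hrep_coset : ∀ (a : P) (x : G), (rep a x)⁻¹ * x ∈ (θ a).range := fun a x =>
    QuotientGroup.eq.mp (hrep_mk a x)
  have hrep_idem : ∀ (a : P) (x : G), rep a (rep a x) = rep a x := by
    intro a x
    show (QuotientGroup.mk (s := (θ a).range) (rep a x)).out = _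
    rw [hrep_mk a x]
  have hrep_eq : ∀ (a : P) (x g : G), g⁻¹ * x ∈ (θ a).range → rep a g = rep a x := by
    intro a x g hg
    show (QuotientGroup.mk (s := (θ a).range) g).out = _
    rw [QuotientGroup.eq.mpr hg]
  -- the elementary foundation set
  set Fe : Set (G × P) := {w | w.2 ∈ Fa ∧ w.1 = rep w.2 w.1} with hFedef
  have hmemFe : ∀ {a : P}, a ∈ Fa → ∀ x : G, (rep a x, a) ∈ Fe := by
    intro a ha x
    exact ⟨ha, (hrep_idem a x).symm⟩
  have hsnd : {p : P | ∃ g : G, (g, p) ∈ Fe} = Fa := by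
    ext p
    constructor
    · rintro ⟨g, hg, -⟩; exact hg
    · intro hp; exact ⟨rep p 1, hmemFe hp 1⟩
  have hFefin : Fe.Finite := by
    have hsub : Fe ⊆ ⋃ a ∈ Fa, Set.range (fun c : G ⧸ (θ a).range => ((c.out, a) : G × P)) := by
      rintro ⟨g, a⟩ ⟨ha, hg⟩
      exact Set.mem_biUnion ha ⟨QuotientGroup.mk g, congrArg (fun x => (x, a)) hg.symm⟩
    refine Set.Finite.subset (Set.Finite.biUnion hFaFound.1 (fun a ha => ?_)) hsub
    haveI := hFafinidx a ha
    exact Set.finite_range _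
  refine ⟨Fe, ⟨?_, ?_, ?_, ?_⟩, ⟨hFefin, ?_⟩, ?_, ?_⟩
  · rw [hsnd]; exact hFaFound
  · rw [hsnd]; exact hFaAcc
  · rintro p ⟨g0, hg0⟩; exact hFafinidx p hg0.1
  · -- transversal property
    rintro p ⟨g0, hg0⟩ x
    have hp : p ∈ Fa := hg0.1
    refine ⟨rep p x, ⟨hmemFe hp x, hrep_coset p x⟩, ?_⟩
    rintro g ⟨⟨-, hg⟩, hgx⟩
    have hg2 : g = rep p g := hg
    rw [hg2, hrep_eq p x g hgx]
  · -- foundation property in S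
    rintro ⟨h, q⟩
    obtain ⟨a, ha, w, hw1, hw2⟩ := hFaFound.2 q
    refine ⟨(rep a h, a), hmemFe ha h, (h, w), ?_, ?_⟩
    · exact (mem_idealS_iff θ).mpr ⟨by simpa using (θ q).range.one_mem, hw1⟩
    · exact (mem_idealS_iff θ).mpr ⟨hrep_coset a h, hw2⟩
  · -- accuracy in S
    rintro ⟨g, a⟩ ⟨ha, hg⟩ ⟨g', a'⟩ ⟨ha', hg'⟩ hne
    rw [Set.eq_empty_iff_forall_notMem]
    rintro ⟨z1, z2⟩ ⟨hz, hz'⟩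
    obtain ⟨hz1, hz2⟩ := (mem_idealS_iff θ).mp hz
    obtain ⟨hz1', hz2'⟩ := (mem_idealS_iff θ).mp hz'
    by_cases haa : a = a'
    · subst haa
      have : g = g' := by
        have hg2 : g = rep a g := hg
        have hg2' : g' = rep a g' := hg'
        rw [hg2, hg2', hrep_eq a z1 g hz1, hrep_eq a z1 g' hz1']
      exact hne (by rw [this])
    · have := hFaAcc a ha a' ha' haa
      exact Set.eq_empty_iff_forall_notMem.mp this z2 ⟨hz2, hz2'⟩
  · -- refinement into F
    rintro ⟨g, a⟩ ⟨ha, hg⟩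
    obtain ⟨f, hf, haf, hcos⟩ := hGdFa a ha g
    exact ⟨f, hf, (mem_idealS_iff θ).mpr ⟨hcos, haf⟩⟩
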